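/- arXiv:1812.11556 — 3 statements merged into one kernel-verified Lean document; each statement's English description precedes it below -/
import Mathlib

section
/- There exists a constant C > 0 such that the following holds. Let 𝔽_q be a finite field of order q, and let B, C ⊆ 𝔽_q be sets with B ∩ C = ∅ and |B|·|C| ≥ C·q. Then the quotient set of the difference set B − C satisfies |(B − C)/(B − C)| ≥ q/3, where B − C = {b − c : b ∈ B, c ∈ C} and (B − C)/(B − C) = {x/y : x, y ∈ B − C, y ≠ 0}. -/
open Finset Pointwise

/-- The quotient set `S/S = {a/b : a, b ∈ S, b ≠ 0}`. -/
def quotSet {F : Type*} [DivisionRing F] [DecidableEq F] (S : Finset F) : Finset F :=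
  (S ×ˢ S.filter fun b => b ≠ 0).image fun x => x.1 / x.2

/-!
For `x ∉ Q = (B - C)/(B - C)` the equation `b₁ - c₁ = x (b₂ - c₂)` has no solution in
`B × C × B × C` (disjointness makes `b₂ - c₂ ≠ 0`). With a primitive additive character `ψ` and
`r(a) = ∑_{b ∈ B, c ∈ C} ψ (a (b - c))`, orthogonality turns this into `∑_a r(a) conj r(a x) = 0`,
so the term `a = 0`, which is `(|B| |C|)²`, is at most `∑_{a ≠ 0} |r(a)| |r(a x)|`. Summing over
`x ∉ Q` and using that `x ↦ a x` permutes `F` for `a ≠ 0` gives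
`#(F \ Q) (|B| |C|)² ≤ (∑_a |r(a)|)² ≤ q² |B| |C|` by Cauchy–Schwarz and Parseval. Hence
`|Q| ≥ q - q² / (|B| |C|)`, which is at least `q / 3` once `|B| |C| ≥ 3q/2`.
-/

open ComplexConjugate

namespace AddChar

variable {R : Type*} [CommRing R] {ι : Type*}

noncomputable def expSum (ψ : AddChar R ℂ) (s : Finset ι) (φ : ι → R) (a : R) : ℂ :=
  ∑ i ∈ s, ψ (a * φ i)

@[simp]
lemma expSum_zero (ψ : AddChar R ℂ) (s : Finset ι) (φ : ι → R) : ψ.expSum s φ 0 = #s := by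
  simp [expSum]

variable [Fintype R]

lemma expSum_mul_conj_expSum {κ : Type*} (ψ : AddChar R ℂ) (s : Finset ι) (t : Finset κ)
    (φ : ι → R) (χ : κ → R) (a x : R) :
    ψ.expSum s φ a * conj (ψ.expSum t χ (a * x)) =
      ∑ p ∈ s ×ˢ t, ψ (a * (φ p.1 - x * χ p.2)) := by
  simp only [expSum, map_sum, ← map_neg_eq_conj, sum_mul_sum, sum_product, ← map_add_eq_mul]
  congr! 3
  ring

lemma norm_expSum_sub (ψ : AddChar R ℂ) (B C : Finset R) (a : R) :
    ‖ψ.expSum (B ×ˢ C) (fun p ↦ p.1 - p.2) a‖ = ‖ψ.expSum B id a‖ * ‖ψ.expSum C id a‖ := by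
  have h := expSum_mul_conj_expSum ψ B C id id a 1
  simp only [mul_one, one_mul, id] at h
  rw [← Complex.norm_conj (ψ.expSum C id a), ← norm_mul, h, expSum]

variable [DecidableEq R] {ψ : AddChar R ℂ}

lemma sum_expSum_mul_conj_expSum (hψ : ψ.IsPrimitive) (s : Finset ι) (φ : ι → R) (x : R) :
    ∑ a, ψ.expSum s φ a * conj (ψ.expSum s φ (a * x)) =
      Fintype.card R * #{p ∈ s ×ˢ s | φ p.1 = x * φ p.2} := by
  simp only [expSum_mul_conj_expSum]
  rw [sum_comm]
  simp only [sum_mulShift _ hψ, sub_eq_zero]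
  push_cast
  rw [sum_ite, sum_const_zero, add_zero, sum_const, nsmul_eq_mul, mul_comm]

lemma sum_norm_expSum_sq (hψ : ψ.IsPrimitive) (S : Finset R) :
    ∑ a, ‖ψ.expSum S id a‖ ^ 2 = Fintype.card R * #S := by
  have h := sum_expSum_mul_conj_expSum hψ S id 1
  simp only [mul_one, Complex.mul_conj', id, one_mul] at h
  have hdiag : #{p ∈ S ×ˢ S | p.1 = p.2} = #S := by
    rw [← diag_card S]
    congr 1
    ext ⟨b, c⟩
    simp only [mem_filter, mem_product, mem_diag]
    grind
  rw [hdiag] at h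
  exact_mod_cast h

lemma sq_card_le_sum_norm_mul_norm_expSum (hψ : ψ.IsPrimitive) {s : Finset ι} {φ : ι → R}
    {x : R} (hx : {p ∈ s ×ˢ s | φ p.1 = x * φ p.2} = ∅) :
    (#s : ℝ) ^ 2 ≤ ∑ a ∈ univ.erase 0, ‖ψ.expSum s φ a‖ * ‖ψ.expSum s φ (a * x)‖ := by
  have hsum := sum_expSum_mul_conj_expSum hψ s φ x
  rw [hx, card_empty, Nat.cast_zero, mul_zero, ← add_sum_erase _ _ (mem_univ 0)] at hsum
  simp only [expSum_zero, zero_mul, Complex.conj_natCast] at hsum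
  calc (#s : ℝ) ^ 2 = ‖∑ a ∈ univ.erase 0, ψ.expSum s φ a * conj (ψ.expSum s φ (a * x))‖ := by
        rw [eq_neg_of_add_eq_zero_right hsum, norm_neg, norm_mul, Complex.norm_natCast, sq]
    _ ≤ _ := norm_sum_le_of_le _ fun a _ ↦ by rw [norm_mul, Complex.norm_conj]

lemma sq_sum_norm_expSum_sub_le (hψ : ψ.IsPrimitive) (B C : Finset R) :
    (∑ a, ‖ψ.expSum (B ×ˢ C) (fun p ↦ p.1 - p.2) a‖) ^ 2 ≤ Fintype.card R ^ 2 * (#B * #C) := by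
  simp only [norm_expSum_sub]
  calc _ ≤ (∑ a, ‖ψ.expSum B id a‖ ^ 2) * ∑ a, ‖ψ.expSum C id a‖ ^ 2 :=
        sum_mul_sq_le_sq_mul_sq _ _ _
    _ = _ := by rw [sum_norm_expSum_sq hψ, sum_norm_expSum_sq hψ]; ring

end AddChar

lemma exists_isPrimitive_addChar (F : Type*) [Field F] [Finite F] :
    ∃ ψ : AddChar F ℂ, ψ.IsPrimitive := by
  obtain ⟨ψ, hψ⟩ := AddChar.exists_apply_ne_zero.2 (one_ne_zero (α := F))
  exact ⟨ψ, AddChar.IsPrimitive.of_ne_one fun h ↦ hψ (by simp [h])⟩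

lemma mem_quotSet {F : Type*} [DivisionRing F] [DecidableEq F] {S : Finset F} {x : F} :
    x ∈ quotSet S ↔ ∃ u ∈ S, ∃ v ∈ S, v ≠ 0 ∧ u / v = x := by
  simp [quotSet, and_assoc]

lemma sum_sum_mul_apply_mul_le_sq {F : Type*} [Field F] [Fintype F] [DecidableEq F] {g : F → ℝ}
    (hg : 0 ≤ g) (S : Finset F) :
    ∑ x ∈ S, ∑ a ∈ univ.erase 0, g a * g (a * x) ≤ (∑ a, g a) ^ 2 := by
  rw [sum_comm, sq, sum_mul]
  refine (sum_le_sum fun a ha ↦ ?_).trans (sum_le_sum_of_subset_of_nonneg (subset_univ _)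
    fun a _ _ ↦ mul_nonneg (hg a) (sum_nonneg fun y _ ↦ hg y))
  rw [← mul_sum]
  refine mul_le_mul_of_nonneg_left ?_ (hg a)
  calc ∑ x ∈ S, g (a * x) ≤ ∑ x, g (a * x) := sum_le_univ_sum_of_nonneg fun x ↦ hg _
    _ = ∑ y, g y := Equiv.sum_comp (Equiv.mulLeft₀ a (ne_of_mem_erase ha)) g

lemma card_compl_quotSet_sub_mul_le {F : Type*} [Field F] [Fintype F] [DecidableEq F]
    {B C : Finset F} (hBC : Disjoint B C) :
    #(univ \ quotSet (B - C)) * (#B * #C) ≤ Fintype.card F ^ 2 := by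
  obtain ⟨ψ, hψ⟩ := exists_isPrimitive_addChar F
  set S := univ \ quotSet (B - C)
  set e : F → ℝ := fun a ↦ ‖ψ.expSum (B ×ˢ C) (fun p ↦ p.1 - p.2) a‖
  have hP : ((#(B ×ˢ C) : ℕ) : ℝ) = #B * #C := by rw [card_product, Nat.cast_mul]
  have hno_solution : ∀ x ∈ S,
      {r ∈ (B ×ˢ C) ×ˢ (B ×ˢ C) | r.1.1 - r.1.2 = x * (r.2.1 - r.2.2)} = ∅ := by
    intro x hx
    rw [filter_eq_empty_iff]
    rintro ⟨⟨b, c⟩, b', c'⟩ hr heq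
    simp only [mem_product] at hr heq
    have hne : b' - c' ≠ 0 := sub_ne_zero.2 fun h ↦ disjoint_left.1 hBC hr.2.1 (h ▸ hr.2.2)
    refine (mem_sdiff.1 hx).2 (mem_quotSet.2 ⟨b - c, sub_mem_sub hr.1.1 hr.1.2,
      b' - c', sub_mem_sub hr.2.1 hr.2.2, hne, by rw [heq, mul_div_cancel_right₀ _ hne]⟩)
  have key : (#S : ℝ) * (#B * #C) * (#B * #C) ≤ Fintype.card F ^ 2 * (#B * #C) :=
    calc (#S : ℝ) * (#B * #C) * (#B * #C) = ∑ x ∈ S, ((#(B ×ˢ C) : ℕ) : ℝ) ^ 2 := by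
          rw [sum_const, nsmul_eq_mul, hP]; ring
      _ ≤ ∑ x ∈ S, ∑ a ∈ univ.erase 0, e a * e (a * x) := sum_le_sum fun x hx ↦
          AddChar.sq_card_le_sum_norm_mul_norm_expSum hψ (hno_solution x hx)
      _ ≤ (∑ a, e a) ^ 2 := sum_sum_mul_apply_mul_le_sq (fun a ↦ norm_nonneg _) S
      _ ≤ Fintype.card F ^ 2 * (#B * #C) := AddChar.sq_sum_norm_expSum_sub_le hψ B C
  rcases Nat.eq_zero_or_pos (#B * #C) with hzero | hpos
  · simp [hzero]
  · exact_mod_cast le_of_mul_le_mul_right key (by exact_mod_cast hpos)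

theorem balog_quotient_of_difference :
    ∃ C : ℝ, 0 < C ∧
      ∀ (F : Type) [Field F] [Fintype F] [DecidableEq F] (B C' : Finset F),
        B ∩ C' = ∅ →
        C * (Fintype.card F : ℝ) ≤ (B.card : ℝ) * (C'.card : ℝ) →
        (Fintype.card F : ℝ) / 3 ≤ ((quotSet (B - C')).card : ℝ) := by
  refine ⟨3 / 2, by norm_num, fun F _ _ _ B C' hBC hcard ↦ ?_⟩
  have hcompl : (#(univ \ quotSet (B - C')) : ℝ) * (#B * #C') ≤ Fintype.card F ^ 2 := by
    exact_mod_cast card_compl_quotSet_sub_mul_le (disjoint_iff_inter_eq_empty.2 hBC)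
  have hpartition : (#(univ \ quotSet (B - C')) : ℝ) + #(quotSet (B - C')) = Fintype.card F := by
    exact_mod_cast card_sdiff_add_card_eq_card (subset_univ _)
  have hq : (0 : ℝ) < Fintype.card F := by exact_mod_cast Fintype.card_pos
  nlinarith [mul_le_mul_of_nonneg_left hcard (Nat.cast_nonneg (#(univ \ quotSet (B - C'))))]
end

section
/- There exists a constant C > 0 such that the following holds. Let 𝔽_q be a finite field of odd order q, let k ≥ 2 be an integer, set d = 2k, and let A ⊆ 𝔽_q with |A| ≥ C·q^{1/2}. Then both |Δ(A^d)/Δ(A^d)| ≥ q/3 and |Δ(A^{d+1})/Δ(A^{d+1})| ≥ q/3, where A^d ⊆ 𝔽_q^d and A^{d+1} ⊆ 𝔽_q^{d+1}. -/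
open Finset

/-- The distance set of a set `E ⊆ F^d`: all values `∑ i, (x i - y i)^2` for `x, y ∈ E`. -/
def distSet {F : Type*} [CommRing F] [DecidableEq F] {d : ℕ} (E : Finset (Fin d → F)) :
    Finset F :=
  (E ×ˢ E).image fun x => ∑ i, (x.1 i - x.2 i) ^ 2

lemma sq_mem_distSet {F : Type*} [CommRing F] [DecidableEq F] {d : ℕ} (hd : 0 < d)
    {A : Finset F} {c c' : F} (hc : c ∈ A) (hc' : c' ∈ A) :
    (c - c') ^ 2 ∈ distSet (Fintype.piFinset fun _ : Fin d => A) := by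
  classical
  set i0 : Fin d := ⟨0, hd⟩
  refine Finset.mem_image.2 ⟨((fun i => if i = i0 then c else c'), fun _ => c'), ?_, ?_⟩
  · refine Finset.mem_product.2 ⟨?_, ?_⟩
    · rw [Fintype.mem_piFinset]
      intro i
      by_cases h : i = i0 <;> simp [h, hc, hc']
    · rw [Fintype.mem_piFinset]
      intro i; exact hc'
  · rw [Finset.sum_eq_single_of_mem i0 (mem_univ _)]
    · simp
    · intro j _ hj
      simp [hj]

lemma exists_ratio {F : Type*} [Field F] [Fintype F] [DecidableEq F] {A : Finset F}
    (hA : Fintype.card F < A.card * A.card) (s : F) :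
    ∃ a ∈ A, ∃ a' ∈ A, ∃ b ∈ A, ∃ b' ∈ A, b ≠ b' ∧ a - a' = s * (b - b') := by
  classical
  have hcard : (univ : Finset F).card < (A ×ˢ A).card := by
    rw [Finset.card_product, Finset.card_univ]; exact hA
  obtain ⟨p, hp, p', hp', hne, heq⟩ :=
    Finset.exists_ne_map_eq_of_card_lt_of_maps_to hcard
      (f := fun p : F × F => p.1 + s * p.2) (fun a _ => mem_univ _)
  have hp1 := (Finset.mem_product.1 hp).1
  have hp2 := (Finset.mem_product.1 hp).2
  have hp'1 := (Finset.mem_product.1 hp').1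
  have hp'2 := (Finset.mem_product.1 hp').2
  have hbb : p'.2 ≠ p.2 := by
    intro h
    apply hne
    have : p.1 = p'.1 := by
      have := heq
      rw [h] at this
      linear_combination this
    exact Prod.ext this h.symm
  refine ⟨p.1, hp1, p'.1, hp'1, p'.2, hp'2, p.2, hp2, hbb, ?_⟩
  linear_combination heq

lemma sq_image_subset {F : Type*} [Field F] [Fintype F] [DecidableEq F] {A : Finset F}
    (hA : Fintype.card F < A.card * A.card) {d : ℕ} (hd : 0 < d) :
    (univ.image fun x : F => x ^ 2) ⊆
      quotSet (distSet (Fintype.piFinset fun _ : Fin d => A)) := by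
  intro t ht
  obtain ⟨x, -, rfl⟩ := Finset.mem_image.1 ht
  obtain ⟨a, ha, a', ha', b, hb, b', hb', hne, heq⟩ := exists_ratio hA x
  have hbne : (b - b') ^ 2 ≠ 0 := pow_ne_zero _ (sub_ne_zero.2 hne)
  refine Finset.mem_image.2 ⟨((a - a') ^ 2, (b - b') ^ 2), ?_, ?_⟩
  · refine Finset.mem_product.2 ⟨sq_mem_distSet hd ha ha', ?_⟩
    exact Finset.mem_filter.2 ⟨sq_mem_distSet hd hb hb', hbne⟩
  · show (a - a') ^ 2 / (b - b') ^ 2 = x ^ 2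
    rw [heq, mul_pow, mul_div_assoc, div_self hbne, mul_one]

lemma card_sq_image {F : Type*} [Field F] [Fintype F] [DecidableEq F] :
    Fintype.card F ≤ 2 * (univ.image fun x : F => x ^ 2).card := by
  classical
  have h := Finset.card_le_mul_card_image (f := fun x : F => x ^ 2) univ 2 ?_
  · simpa [Finset.card_univ] using h
  · intro a _
    show (univ.filter fun x : F => x ^ 2 = a).card ≤ 2
    by_cases hne : (univ.filter fun x : F => x ^ 2 = a).Nonempty
    · obtain ⟨x0, hx0⟩ := hne
      have hx0' : x0 ^ 2 = a := (Finset.mem_filter.1 hx0).2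
      have hsub : (univ.filter fun x : F => x ^ 2 = a) ⊆ {x0, -x0} := by
        intro y hy
        have hy' : y ^ 2 = a := (Finset.mem_filter.1 hy).2
        have hz : (y - x0) * (y + x0) = 0 := by linear_combination hy' - hx0'
        rcases mul_eq_zero.1 hz with h | h
        · simp [sub_eq_zero.1 h]
        · have : y = -x0 := eq_neg_of_add_eq_zero_left h
          simp [this]
      calc (univ.filter fun x : F => x ^ 2 = a).card ≤ ({x0, -x0} : Finset F).card :=
            Finset.card_le_card hsub
        _ ≤ 2 := (Finset.card_insert_le _ _).trans (by simp)
    · rw [Finset.not_nonempty_iff_eq_empty.1 hne]; simp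

theorem quotient_distance_set_arbitrary_finite_field :
    ∃ C : ℝ, 0 < C ∧
      ∀ (F : Type) [Field F] [Fintype F] [DecidableEq F] (k : ℕ) (A : Finset F),
        Odd (Fintype.card F) → 2 ≤ k →
        C * (Fintype.card F : ℝ) ^ ((1 : ℝ) / 2) ≤ (A.card : ℝ) →
        (Fintype.card F : ℝ) / 3 ≤
            ((quotSet (distSet (Fintype.piFinset fun _ : Fin (2 * k) => A))).card : ℝ) ∧
          (Fintype.card F : ℝ) / 3 ≤
            ((quotSet (distSet (Fintype.piFinset fun _ : Fin (2 * k + 1) => A))).card : ℝ) := by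
  refine ⟨2, by norm_num, ?_⟩
  intro F _ _ _ k A _ hk hA
  set q := Fintype.card F with hq
  have hq1 : (1 : ℝ) ≤ (q : ℝ) := by
    exact_mod_cast Nat.one_le_iff_ne_zero.2 Fintype.card_ne_zero
  have hrpow : ((q : ℝ) ^ ((1 : ℝ) / 2)) ^ 2 = (q : ℝ) := by
    rw [← Real.rpow_natCast ((q : ℝ) ^ ((1 : ℝ) / 2)) 2, ← Real.rpow_mul (by positivity)]
    norm_num
  have hApos : (0 : ℝ) ≤ (q : ℝ) ^ ((1 : ℝ) / 2) := by positivity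
  have hA2 : (q : ℝ) < (A.card : ℝ) * (A.card : ℝ) := by
    have h1 : (2 : ℝ) * (q : ℝ) ^ ((1 : ℝ) / 2) ≤ (A.card : ℝ) := hA
    nlinarith [hrpow, hApos, hq1]
  have hAcard : q < A.card * A.card := by exact_mod_cast hA2
  have key : ∀ d : ℕ, 0 < d →
      (q : ℝ) / 3 ≤ ((quotSet (distSet (Fintype.piFinset fun _ : Fin d => A))).card : ℝ) := by
    intro d hd
    have hsub := sq_image_subset hAcard hd
    have h1 : (univ.image fun x : F => x ^ 2).card ≤
        (quotSet (distSet (Fintype.piFinset fun _ : Fin d => A))).card :=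
      Finset.card_le_card hsub
    have h2 := card_sq_image (F := F)
    have h1' : ((univ.image fun x : F => x ^ 2).card : ℝ) ≤
        ((quotSet (distSet (Fintype.piFinset fun _ : Fin d => A))).card : ℝ) := by
      exact_mod_cast h1
    have h2' : (q : ℝ) ≤ 2 * ((univ.image fun x : F => x ^ 2).card : ℝ) := by
      exact_mod_cast h2
    linarith
  exact ⟨key _ (by positivity), key _ (by positivity)⟩
end

section
/- Let p be an odd prime, let F be a finite field of order q = p^2, let K ⊆ F be its prime subfield (so |K| = p), and let d ≥ 2 be an integer. Set E = K^d ⊆ F^d. Then |E| = q^{d/2}, the distance set satisfies Δ(E) = K, and consequently |Δ(E)/Δ(E)| = |Δ(E)·Δ(E)| = p = q^{1/2}. -/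
open Finset

/-- The product set `S·S = {a·b : a, b ∈ S}`. -/
def prodSet {F : Type*} [Mul F] [DecidableEq F] (S : Finset F) : Finset F :=
  (S ×ˢ S).image fun x => x.1 * x.2

theorem subfield_construction (p : ℕ) (hp : p.Prime) (hodd : Odd p)
    (F : Type*) [Field F] [Fintype F] [DecidableEq F] (hq : Fintype.card F = p ^ 2)
    (K : Finset F) (hK : (K : Set F) = ((⊥ : Subfield F) : Set F))
    (d : ℕ) (hd : 2 ≤ d) :
    K.card = p ∧
    ((Fintype.piFinset fun _ : Fin d => K).card : ℝ) =
      (Fintype.card F : ℝ) ^ ((d : ℝ) / 2) ∧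
    distSet (Fintype.piFinset fun _ : Fin d => K) = K ∧
    (quotSet (distSet (Fintype.piFinset fun _ : Fin d => K))).card = p ∧
    (prodSet (distSet (Fintype.piFinset fun _ : Fin d => K))).card = p ∧
    (p : ℝ) = (Fintype.card F : ℝ) ^ ((1 : ℝ) / 2) := by
  haveI : Fact p.Prime := ⟨hp⟩
  -- characteristic of F is p
  haveI : CharP F (ringChar F) := ringChar.charP F
  obtain ⟨n, hralph, hcard'⟩ := FiniteField.card F (ringChar F)
  have hrp : ringChar F = p := by
    have hdvd : ringChar F ∣ p ^ 2 := by
      rw [← hq, hcard']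
      exact dvd_pow_self _ (by positivity)
    exact (Nat.prime_dvd_prime_iff_eq hralph hp).mp (hralph.dvd_of_dvd_pow hdvd)
  haveI hcharF : CharP F p := hrp ▸ ringChar.charP F
  -- the bottom subfield is the range of the canonical map from ZMod p
  set φ : ZMod p →+* F := ZMod.castHom dvd_rfl F with hφ
  have hbot : (⊥ : Subfield F) = φ.fieldRange := by
    refine le_antisymm bot_le ?_
    rintro x ⟨a, rfl⟩
    have : φ a = ((a.val : ℕ) : F) := by
      conv_lhs => rw [← ZMod.natCast_rightInverse a, map_natCast]
    rw [this]
    exact natCast_mem _ _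
  have hKmem : ∀ x : F, x ∈ K ↔ ∃ a : ZMod p, φ a = x := by
    intro x
    rw [← Finset.mem_coe, hK, SetLike.mem_coe, hbot]
    exact RingHom.mem_fieldRange
  have hφinj : Function.Injective φ := φ.injective
  -- K as an image
  have hKimg : K = Finset.univ.image φ := by
    ext x
    simp only [Finset.mem_image, Finset.mem_univ, true_and]
    exact hKmem x
  have hKcard : K.card = p := by
    rw [hKimg, Finset.card_image_of_injective _ hφinj, Finset.card_univ, ZMod.card]
  -- closure properties of K
  have hsub : ∀ x, x ∈ (⊥ : Subfield F) → x ∈ K := fun x hx =>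
    (hKmem x).2 (by rwa [hbot] at hx)
  have hzero : (0 : F) ∈ K := hsub 0 (zero_mem _)
  have hone : (1 : F) ∈ K := hsub 1 (one_mem _)
  set E := Fintype.piFinset fun _ : Fin d => K with hE
  -- the distance set equals K
  have hdist : distSet E = K := by
    apply le_antisymm
    · intro a ha
      rw [distSet, Finset.mem_image] at ha
      obtain ⟨⟨x, y⟩, hxy, rfl⟩ := ha
      rw [Finset.mem_product] at hxy
      obtain ⟨hx, hy⟩ := hxy
      rw [Fintype.mem_piFinset] at hx hy
      refine hsub _ (sum_mem fun i _ => pow_mem (sub_mem ?_ ?_) 2)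
      · rw [← SetLike.mem_coe, ← hK]; exact hx i
      · rw [← SetLike.mem_coe, ← hK]; exact hy i
    · intro a ha
      obtain ⟨b, hb⟩ := (hKmem a).1 ha
      obtain ⟨s, t, hst⟩ := ZMod.sq_add_sq p b
      have h0d : 0 < d := by omega
      have h1d : 1 < d := by omega
      set i0 : Fin d := ⟨0, h0d⟩
      set i1 : Fin d := ⟨1, h1d⟩
      have hne : i1 ≠ i0 := by simp [i0, i1, Fin.ext_iff]
      set x : Fin d → F := fun i => if i = i0 then φ s else if i = i1 then φ t else 0 with hx
      set y : Fin d → F := fun _ => (0 : F) with hy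
      have hxE : x ∈ E := by
        rw [Fintype.mem_piFinset]
        intro i
        simp only [hx]
        split_ifs
        · exact (hKmem _).2 ⟨s, rfl⟩
        · exact (hKmem _).2 ⟨t, rfl⟩
        · exact hzero
      have hyE : y ∈ E := by
        rw [Fintype.mem_piFinset]; intro i; exact hzero
      have hsum : ∑ i, (x i - y i) ^ 2 = a := by
        have : ∀ i : Fin d, (x i - y i) ^ 2 = x i ^ 2 := by
          intro i; simp [hy]
        simp only [this]
        rw [← Finset.add_sum_erase _ _ (Finset.mem_univ i0),
          ← Finset.add_sum_erase _ _ (Finset.mem_erase.2 ⟨hne, Finset.mem_univ i1⟩)]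
        have hrest : ∑ i ∈ (Finset.univ.erase i0).erase i1, x i ^ 2 = 0 := by
          apply Finset.sum_eq_zero
          intro i hi
          rw [Finset.mem_erase, Finset.mem_erase] at hi
          simp [hx, hi.1, hi.2.1]
        have e0 : x i0 = φ s := by simp [hx]
        have e1 : x i1 = φ t := by simp [hx, hne]
        rw [hrest, add_zero, e0, e1, ← map_pow, ← map_pow, ← map_add, hst, hb]
      rw [distSet, Finset.mem_image]
      exact ⟨(x, y), Finset.mem_product.2 ⟨hxE, hyE⟩, hsum⟩
  -- quotient set
  have hquot : quotSet K = K := by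
    apply le_antisymm
    · intro a ha
      rw [quotSet, Finset.mem_image] at ha
      obtain ⟨⟨u, v⟩, huv, rfl⟩ := ha
      rw [Finset.mem_product, Finset.mem_filter] at huv
      refine hsub _ (div_mem ?_ ?_)
      · rw [← SetLike.mem_coe, ← hK]; exact huv.1
      · rw [← SetLike.mem_coe, ← hK]; exact huv.2.1
    · intro a ha
      rw [quotSet, Finset.mem_image]
      exact ⟨(a, 1), Finset.mem_product.2 ⟨ha, Finset.mem_filter.2 ⟨hone, one_ne_zero⟩⟩,
        div_one a⟩
  have hprod : prodSet K = K := by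
    apply le_antisymm
    · intro a ha
      rw [prodSet, Finset.mem_image] at ha
      obtain ⟨⟨u, v⟩, huv, rfl⟩ := ha
      rw [Finset.mem_product] at huv
      refine hsub _ (mul_mem ?_ ?_)
      · rw [← SetLike.mem_coe, ← hK]; exact huv.1
      · rw [← SetLike.mem_coe, ← hK]; exact huv.2
    · intro a ha
      rw [prodSet, Finset.mem_image]
      exact ⟨(a, 1), Finset.mem_product.2 ⟨ha, hone⟩, mul_one a⟩
  -- real-power computations
  have hp0 : (0 : ℝ) ≤ (p : ℝ) := Nat.cast_nonneg p
  have hcardF : ((Fintype.card F : ℕ) : ℝ) = (p : ℝ) ^ (2 : ℝ) := by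
    rw [hq]
    push_cast
    rw [Real.rpow_two]
  constructor
  · exact hKcard
  refine ⟨?_, hdist, ?_, ?_, ?_⟩
  · have hpi : (Fintype.piFinset fun _ : Fin d => K).card = p ^ d := by
      rw [Fintype.card_piFinset]
      simp [hKcard]
    rw [hpi, hcardF, ← Real.rpow_mul hp0]
    have : (2 : ℝ) * ((d : ℝ) / 2) = (d : ℝ) := by ring
    rw [this, Real.rpow_natCast]
    push_cast
    ring
  · rw [hdist, hquot, hKcard]
  · rw [hdist, hprod, hKcard]
  · rw [hcardF, ← Real.rpow_mul hp0]
    norm_num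
end
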